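/- Let q ≥ 2 be an integer, let m, n, k, w, δ be integers with 0 ≤ k ≤ n ≤ m, (n−k)/2 < w ≤ n, and 2w − (n−k) ≤ δ ≤ n − k. Define Ā_w := q^{m(k−n)} · ∏_{i=0}^{w−1} (q^m − q^i)(q^n − q^i)/(q^w − q^i) and P := (Σ_{i=⌈w − (n−k)/2 + δ/2⌉}^{min{δ, w}} [n−w, δ−i]_q · [w, i]_q · q^{(w−i)(δ−i)}) / [n, δ]_q. Then Ā_w · P ≤ 64 n · q^{m(k−n) + w(n+m) − w^2 − ⌈δ/2 + w − (n−k)/2⌉ · ((n+k)/2 − ⌈δ/2⌉)}. -/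

import Mathlib

/-!
Sandwich every Gaussian binomial as `q^{b(a-b)} ≤ [a, b]_q ≤ 4 q^{b(a-b)}` and bound the product
in `Ā_w` by `4 q^{w(m+n-w)}`; the constant `4` comes from `∏_{j ≥ 1} (1 - q^{-j}) ≥ 1/4` for
`q ≥ 2`. The `i`-th term of the sum in `P` is then at most `16 q^{δ(n-δ) - i(i+n-δ-w)}`, whose
exponent decreases in `i` on the summation range; with at most `n` terms and
`[n, δ]_q ≥ q^{δ(n-δ)}` this gives `P ≤ 16 n q^{-i₀(i₀+n-δ-w)}` for the lower limit `i₀`.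
Finally `i₀ + n - δ - w ≥ (n+k)/2 - ⌈δ/2⌉` by the choice of `i₀`.
-/

/-- The Gaussian binomial coefficient `[a, b]_q`, defined as
`∏_{i=0}^{b-1} (q^{a-i} - 1)/(q^{b-i} - 1)` for `0 ≤ b ≤ a`, and `0` otherwise. -/
noncomputable def gaussBinom (q : ℚ) (a b : ℤ) : ℚ :=
  if 0 ≤ b ∧ b ≤ a then
    ∏ i ∈ Finset.range b.toNat, (q ^ (a - i).toNat - 1) / (q ^ (b - i).toNat - 1)
  else 0

open Finset

section OrderedField

variable {K : Type*} [Field K] [LinearOrder K] [IsStrictOrderedRing K]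

-- The slack `x ^ (b + 1)` is what lets the induction go through.
lemma quarter_add_pow_le_prod_one_sub_pow {x : K} (hx0 : 0 ≤ x) (hx : x ≤ 2⁻¹) (b : ℕ) :
    4⁻¹ + x ^ (b + 1) ≤ ∏ j ∈ range b, (1 - x ^ (j + 1)) := by
  induction b with
  | zero => norm_num; linarith
  | succ b ih =>
    rw [prod_range_succ]
    rcases Nat.eq_zero_or_pos b with rfl | hb
    · norm_num; nlinarith
    · have hsq : x ^ (b + 1) ≤ x ^ 2 := pow_le_pow_of_le_one hx0 (by linarith) (by omega)
      have hpos : 0 ≤ x ^ (b + 1) := by positivity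
      rw [pow_succ x (b + 1)]
      nlinarith [mul_nonneg hpos (by nlinarith : (0 : K) ≤ 3 / 4 - x ^ (b + 1) - x)]

lemma quarter_le_prod_one_sub_pow_sub {x : K} (hx0 : 0 ≤ x) (hx : x ≤ 2⁻¹) (b : ℕ) :
    4⁻¹ ≤ ∏ i ∈ range b, (1 - x ^ (b - i)) := by
  rw [← prod_range_reflect]
  calc (4⁻¹ : K) ≤ 4⁻¹ + x ^ (b + 1) := le_add_of_nonneg_right (by positivity)
    _ ≤ ∏ j ∈ range b, (1 - x ^ (j + 1)) := quarter_add_pow_le_prod_one_sub_pow hx0 hx b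
    _ = _ := prod_congr rfl fun j hj => by
        rw [mem_range] at hj
        rw [show b - (b - 1 - j) = j + 1 by omega]

lemma prod_le_four_mul_pow {x C : K} (hx0 : 0 ≤ x) (hx : x ≤ 2⁻¹) {b : ℕ} {f : ℕ → K}
    (hf0 : ∀ i < b, 0 ≤ f i) (hf : ∀ i < b, f i * (1 - x ^ (b - i)) ≤ C) :
    ∏ i ∈ range b, f i ≤ 4 * C ^ b := by
  have hfactor : ∀ i < b, 0 ≤ 1 - x ^ (b - i) := fun i _ =>
    sub_nonneg.2 (pow_le_one₀ hx0 (hx.trans (by norm_num)))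
  have hprod : (∏ i ∈ range b, f i) * ∏ i ∈ range b, (1 - x ^ (b - i)) ≤ C ^ b := by
    rw [← prod_mul_distrib, ← card_range b, ← prod_const, card_range]
    refine prod_le_prod (fun i hi => ?_) (fun i hi => hf i (mem_range.1 hi))
    exact mul_nonneg (hf0 i (mem_range.1 hi)) (hfactor i (mem_range.1 hi))
  have hprod_nonneg : 0 ≤ ∏ i ∈ range b, f i := prod_nonneg fun i hi => hf0 i (mem_range.1 hi)
  nlinarith [quarter_le_prod_one_sub_pow_sub hx0 hx b]

lemma pow_add_mul_one_sub_inv_pow {Q : K} (hQ : Q ≠ 0) (e d : ℕ) :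
    Q ^ (e + d) * (1 - Q⁻¹ ^ d) = Q ^ (e + d) - Q ^ e := by
  rw [mul_sub, mul_one, pow_add, inv_pow, mul_assoc, mul_inv_cancel₀ (pow_ne_zero d hQ), mul_one]

lemma prod_sub_pow_mul_sub_pow_div_le {Q : K} (hQ : 2 ≤ Q) {m n w : ℕ} (hwn : w ≤ n)
    (hnm : n ≤ m) :
    ∏ i ∈ range w, (Q ^ m - Q ^ i) * (Q ^ n - Q ^ i) / (Q ^ w - Q ^ i)
      ≤ 4 * Q ^ (w * (m + n - w)) := by
  have hQ1 : 1 ≤ Q := by linarith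
  have hQ0 : Q ≠ 0 := by positivity
  have hden : ∀ i < w, Q ^ w - Q ^ i = Q ^ w * (1 - Q⁻¹ ^ (w - i)) := fun i hi => by
    have h := pow_add_mul_one_sub_inv_pow hQ0 i (w - i)
    rwa [Nat.add_sub_cancel' hi.le, eq_comm] at h
  have hnum : ∀ i < w, 0 ≤ (Q ^ m - Q ^ i) * (Q ^ n - Q ^ i) := fun i hi =>
    mul_nonneg (sub_nonneg.2 (pow_le_pow_right₀ hQ1 (by omega)))
      (sub_nonneg.2 (pow_le_pow_right₀ hQ1 (by omega)))
  have hden_pos : ∀ i < w, 0 < Q ^ w - Q ^ i := fun i hi =>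
    sub_pos.2 (pow_lt_pow_right₀ (by linarith) hi)
  rw [mul_comm w, pow_mul]
  refine prod_le_four_mul_pow (by positivity) (inv_anti₀ two_pos hQ)
    (fun i hi => div_nonneg (hnum i hi) (hden_pos i hi).le) fun i hi => ?_
  have hfac : 0 < 1 - Q⁻¹ ^ (w - i) := by
    have := hden_pos i hi
    rw [hden i hi] at this
    exact pos_of_mul_pos_right this (by positivity)
  rw [hden i hi, ← div_div, div_mul_cancel₀ _ hfac.ne', div_le_iff₀ (by positivity),
    ← pow_add, Nat.sub_add_cancel (by omega), pow_add]
  exact mul_le_mul (sub_le_self _ (by positivity)) (sub_le_self _ (by positivity))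
    (sub_nonneg.2 (pow_le_pow_right₀ hQ1 (by omega))) (by positivity)

end OrderedField

lemma gaussBinom_nonneg {q : ℚ} (hq : 1 ≤ q) (a b : ℤ) : 0 ≤ gaussBinom q a b := by
  unfold gaussBinom
  split_ifs
  · exact prod_nonneg fun i _ =>
      div_nonneg (sub_nonneg.2 (one_le_pow₀ hq)) (sub_nonneg.2 (one_le_pow₀ hq))
  · exact le_rfl

lemma gaussBinom_natCast (q : ℚ) {a b : ℕ} (hba : b ≤ a) :
    gaussBinom q a b = ∏ i ∈ range b, (q ^ (a - i) - 1) / (q ^ (b - i) - 1) := by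
  rw [gaussBinom, if_pos ⟨Int.natCast_nonneg b, by exact_mod_cast hba⟩, Int.toNat_natCast]
  refine prod_congr rfl fun i hi => ?_
  rw [mem_range] at hi
  rw [show ((a : ℤ) - (i : ℕ)).toNat = a - i by omega,
    show ((b : ℤ) - (i : ℕ)).toNat = b - i by omega]

lemma pow_le_gaussBinom {q : ℚ} (hq : 2 ≤ q) {a b : ℕ} (hba : b ≤ a) :
    q ^ (b * (a - b)) ≤ gaussBinom q a b := by
  have hq1 : 1 ≤ q := by linarith
  rw [gaussBinom_natCast q hba, mul_comm, pow_mul, pow_eq_prod_const]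
  refine prod_le_prod (fun _ _ => by positivity) fun i hi => ?_
  rw [mem_range] at hi
  have hden : 0 < q ^ (b - i) - 1 := by
    linarith [le_self_pow₀ hq1 (show b - i ≠ 0 by omega)]
  rw [le_div_iff₀ hden, mul_sub, mul_one, ← pow_add, show a - b + (b - i) = a - i by omega]
  linarith [one_le_pow₀ (M₀ := ℚ) hq1 (n := a - b)]

lemma gaussBinom_le {q : ℚ} (hq : 2 ≤ q) {a b : ℕ} (hba : b ≤ a) :
    gaussBinom q a b ≤ 4 * q ^ (b * (a - b)) := by
  have hq1 : 1 ≤ q := by linarith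
  rw [gaussBinom_natCast q hba, mul_comm b, pow_mul]
  refine prod_le_four_mul_pow (by positivity) (inv_anti₀ two_pos hq)
    (fun i _ => div_nonneg (sub_nonneg.2 (one_le_pow₀ hq1)) (sub_nonneg.2 (one_le_pow₀ hq1)))
    fun i hi => ?_
  have hden : 0 < q ^ (b - i) - 1 := by
    linarith [le_self_pow₀ hq1 (show b - i ≠ 0 by omega)]
  have hpow := pow_add_mul_one_sub_inv_pow (show q ≠ 0 by positivity) 0 (b - i)
  rw [zero_add, pow_zero] at hpow
  have hfac : 0 < 1 - q⁻¹ ^ (b - i) := pos_of_mul_pos_right (hpow ▸ hden) (by positivity)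
  rw [← hpow, ← div_div, div_mul_cancel₀ _ hfac.ne', div_le_iff₀ (by positivity),
    ← pow_add, show a - b + (b - i) = a - i by omega]
  exact sub_le_self _ zero_le_one

lemma gaussBinom_mul_gaussBinom_mul_zpow_le {q : ℚ} (hq : 2 ≤ q) {n w δ : ℕ} {i : ℤ}
    (hi0 : 0 ≤ i) (hiw : i ≤ w) (hiδ : i ≤ δ) (hδw : δ + w ≤ n + i) :
    gaussBinom q ((n : ℤ) - w) ((δ : ℤ) - i) * gaussBinom q w i
        * q ^ (((w : ℤ) - i) * ((δ : ℤ) - i))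
      ≤ 16 * q ^ ((δ : ℤ) * (n - δ) - i * (i + n - δ - w)) := by
  lift i to ℕ using hi0
  have hq0 : 0 ≤ q := by linarith
  have hδi : δ - i ≤ n - w := by omega
  rw [show (n : ℤ) - w = ((n - w : ℕ) : ℤ) by omega, show (δ : ℤ) - i = ((δ - i : ℕ) : ℤ) by omega,
    show (w : ℤ) - i = ((w - i : ℕ) : ℤ) by omega, ← Nat.cast_mul, zpow_natCast]
  calc gaussBinom q (n - w : ℕ) (δ - i : ℕ) * gaussBinom q w i * q ^ ((w - i) * (δ - i))
      ≤ 4 * q ^ ((δ - i) * (n - w - (δ - i))) * (4 * q ^ (i * (w - i)))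
          * q ^ ((w - i) * (δ - i)) := by
        gcongr
        · exact gaussBinom_nonneg (by linarith) _ _
        · exact gaussBinom_le hq hδi
        · exact gaussBinom_le hq (by omega)
    _ = 16 * q ^ (((δ - i) * (n - w - (δ - i)) + i * (w - i) + (w - i) * (δ - i) : ℕ) : ℤ) := by
        rw [zpow_natCast, pow_add, pow_add]
        ring
    _ = 16 * q ^ ((δ : ℤ) * (n - δ) - i * (i + n - δ - w)) := by
        congr 2
        push_cast [Nat.cast_sub hδi, Nat.cast_sub (show i ≤ w by omega),
          Nat.cast_sub (show i ≤ δ by omega), Nat.cast_sub (show w ≤ n by omega)]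
        ring

lemma sum_gaussBinom_mul_gaussBinom_mul_zpow_le {q : ℚ} (hq : 2 ≤ q) {n w δ : ℕ} {i₀ : ℤ}
    (hi₀ : 0 < i₀) (hδw : δ + w ≤ n + i₀) (hwn : w ≤ n) :
    ∑ i ∈ Icc i₀ ((min δ w : ℕ) : ℤ),
        gaussBinom q ((n : ℤ) - w) ((δ : ℤ) - i) * gaussBinom q w i
          * q ^ (((w : ℤ) - i) * ((δ : ℤ) - i))
      ≤ n * (16 * q ^ ((δ : ℤ) * (n - δ) - i₀ * (i₀ + n - δ - w))) := by
  have hcard : (#(Icc i₀ ((min δ w : ℕ) : ℤ)) : ℚ) ≤ n := by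
    rw [Int.card_Icc]
    exact_mod_cast (show (((min δ w : ℕ) : ℤ) + 1 - i₀).toNat ≤ n by omega)
  refine (sum_le_card_nsmul _ _ (16 * q ^ ((δ : ℤ) * (n - δ) - i₀ * (i₀ + n - δ - w)))
    fun i hi => ?_).trans ?_
  · rw [mem_Icc] at hi
    refine (gaussBinom_mul_gaussBinom_mul_zpow_le hq (by omega) (by omega) (by omega)
      (by omega)).trans ?_
    have hmono : i₀ * (i₀ + n - δ - w) ≤ i * (i + n - δ - w) := by
      nlinarith [mul_nonneg (sub_nonneg.2 hi.1) (show (0 : ℤ) ≤ i + i₀ + n - δ - w by omega)]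
    gcongr
    linarith
  · rw [nsmul_eq_mul]
    gcongr

lemma sum_div_gaussBinom_le {q : ℚ} (hq : 2 ≤ q) {n w δ : ℕ} {i₀ : ℤ} (hi₀ : 0 < i₀)
    (hδw : δ + w ≤ n + i₀) (hwn : w ≤ n) (hδn : δ ≤ n) :
    (∑ i ∈ Icc i₀ ((min δ w : ℕ) : ℤ),
        gaussBinom q ((n : ℤ) - w) ((δ : ℤ) - i) * gaussBinom q w i
          * q ^ (((w : ℤ) - i) * ((δ : ℤ) - i))) / gaussBinom q n δ
      ≤ n * (16 * q ^ (-(i₀ * (i₀ + n - δ - w)))) := by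
  have hq0 : q ≠ 0 := by positivity
  have hD := pow_le_gaussBinom hq hδn
  rw [div_le_iff₀ ((pow_pos (by positivity) _).trans_le hD)]
  refine (sum_gaussBinom_mul_gaussBinom_mul_zpow_le hq hi₀ hδw hwn).trans ?_
  rw [sub_eq_add_neg, zpow_add₀ hq0, show (δ : ℤ) * (n - δ) = ((δ * (n - δ) : ℕ) : ℤ) by
    push_cast [Nat.cast_sub hδn]; ring, zpow_natCast]
  have hfactor : 0 ≤ (n : ℚ) * (16 * q ^ (-(i₀ * (i₀ + n - δ - w)))) := by positivity
  linarith [mul_le_mul_of_nonneg_left hD hfactor]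

lemma mul_half_sub_ceil_half_le_mul {n k w δ : ℕ} {i₀ : ℤ}
    (hi₀ : (w : ℚ) - ((n : ℚ) - k) / 2 + δ / 2 ≤ i₀) (hi₀_nonneg : 0 ≤ i₀) :
    (i₀ : ℝ) * ((n + k) / 2 - ⌈(δ : ℚ) / 2⌉) ≤ i₀ * (i₀ + n - δ - w) := by
  have hi₀R := (Rat.cast_le (K := ℝ)).2 hi₀
  have hcR := (Rat.cast_le (K := ℝ)).2 (Int.le_ceil ((δ : ℚ) / 2))
  push_cast at hi₀R hcR
  exact mul_le_mul_of_nonneg_left (by linarith) (by exact_mod_cast hi₀_nonneg)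

theorem stmt10_general (q m n k w δ : ℕ) (hq : 2 ≤ q)
    (hn : n ≤ m) (hw1 : ((n : ℚ) - k) / 2 < w) (hw2 : w ≤ n)
    (hδ2 : δ + k ≤ n) :
    ((q : ℝ) ^ ((m : ℤ) * ((k : ℤ) - n)) * ∏ i ∈ Finset.range w,
        ((q : ℝ) ^ m - (q : ℝ) ^ i) * ((q : ℝ) ^ n - (q : ℝ) ^ i)
          / ((q : ℝ) ^ w - (q : ℝ) ^ i))
      * ((∑ i ∈ Finset.Icc (⌈(w : ℚ) - ((n : ℚ) - k) / 2 + (δ : ℚ) / 2⌉) ((min δ w : ℕ) : ℤ),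
            ((gaussBinom q ((n : ℤ) - w) ((δ : ℤ) - i) : ℚ) : ℝ)
              * ((gaussBinom q w i : ℚ) : ℝ) * (q : ℝ) ^ (((w : ℤ) - i) * ((δ : ℤ) - i)))
          / ((gaussBinom q n δ : ℚ) : ℝ))
      ≤ 64 * n * (q : ℝ) ^ ((m : ℝ) * ((k : ℝ) - n) + w * ((n : ℝ) + m) - (w : ℝ) ^ 2
          - (⌈(δ : ℚ) / 2 + w - ((n : ℚ) - k) / 2⌉ : ℝ)
            * (((n : ℝ) + k) / 2 - (⌈(δ : ℚ) / 2⌉ : ℝ))) := by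
  have hqQ : (2 : ℚ) ≤ q := by exact_mod_cast hq
  have hqR : (2 : ℝ) ≤ q := by exact_mod_cast hq
  rw [show (δ : ℚ) / 2 + w - ((n : ℚ) - k) / 2 = w - ((n : ℚ) - k) / 2 + δ / 2 by ring]
  set i₀ := ⌈(w : ℚ) - ((n : ℚ) - k) / 2 + δ / 2⌉
  have hi₀ : (w : ℚ) - ((n : ℚ) - k) / 2 + δ / 2 ≤ i₀ := Int.le_ceil _
  have hi₀_pos : 0 < i₀ := Int.ceil_pos.2 (by linarith [(Nat.cast_nonneg δ : (0 : ℚ) ≤ δ)])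
  have hδw : (δ : ℤ) + w ≤ n + i₀ := by
    have : (δ : ℚ) + k ≤ n := by exact_mod_cast hδ2
    exact_mod_cast (show (δ : ℚ) + w ≤ n + i₀ by linarith)
  have hP := (Rat.cast_le (K := ℝ)).2 (sum_div_gaussBinom_le hqQ hi₀_pos hδw hw2 (by omega))
  simp only [Rat.cast_div, Rat.cast_sum, Rat.cast_mul, Rat.cast_zpow, Rat.cast_natCast,
    Rat.cast_ofNat] at hP
  calc _ ≤ (q : ℝ) ^ ((m : ℤ) * ((k : ℤ) - n)) * (4 * (q : ℝ) ^ (w * (m + n - w)))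
          * (n * (16 * (q : ℝ) ^ (-(i₀ * (i₀ + n - δ - w))))) := by
        gcongr
        · refine div_nonneg (sum_nonneg fun i _ => mul_nonneg (mul_nonneg ?_ ?_) (by positivity))
            ?_ <;> exact Rat.cast_nonneg.2 (gaussBinom_nonneg (by linarith) _ _)
        · exact prod_sub_pow_mul_sub_pow_div_le hqR hw2 hn
    _ = 64 * n * (q : ℝ) ^ ((m : ℤ) * ((k : ℤ) - n) + (w * (m + n - w) : ℕ)
          - i₀ * (i₀ + n - δ - w)) := by
        have hq0 : (q : ℝ) ≠ 0 := by positivity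
        rw [zpow_sub₀ hq0, zpow_add₀ hq0, zpow_natCast, zpow_neg, div_eq_mul_inv]
        ring
    _ ≤ _ := by
        rw [← Real.rpow_intCast]
        gcongr
        · linarith
        · push_cast [Nat.cast_sub (show w ≤ m + n by omega)]
          linarith [mul_half_sub_ceil_half_le_mul hi₀ hi₀_pos.le]

/-- With `Ā_w = q^{m(k−n)} ∏_{i=0}^{w−1} (q^m − q^i)(q^n − q^i)/(q^w − q^i)` and
`P = (Σ_{i=⌈w−(n−k)/2+δ/2⌉}^{min{δ,w}} [n−w, δ−i]_q [w, i]_q q^{(w−i)(δ−i)}) / [n, δ]_q`,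
one has `Ā_w · P ≤ 64 n q^{m(k−n) + w(n+m) − w² − ⌈δ/2 + w − (n−k)/2⌉((n+k)/2 − ⌈δ/2⌉)}`. -/
theorem stmt10 (q m n k w δ : ℕ) (hq : 2 ≤ q)
    (hk : k ≤ n) (hn : n ≤ m) (hw1 : ((n : ℚ) - k) / 2 < w) (hw2 : w ≤ n)
    (hδ1 : 2 * w + k ≤ δ + n) (hδ2 : δ + k ≤ n) :
    ((q : ℝ) ^ ((m : ℤ) * ((k : ℤ) - n)) * ∏ i ∈ Finset.range w,
        ((q : ℝ) ^ m - (q : ℝ) ^ i) * ((q : ℝ) ^ n - (q : ℝ) ^ i)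
          / ((q : ℝ) ^ w - (q : ℝ) ^ i))
      * ((∑ i ∈ Finset.Icc (⌈(w : ℚ) - ((n : ℚ) - k) / 2 + (δ : ℚ) / 2⌉) ((min δ w : ℕ) : ℤ),
            ((gaussBinom q ((n : ℤ) - w) ((δ : ℤ) - i) : ℚ) : ℝ)
              * ((gaussBinom q w i : ℚ) : ℝ) * (q : ℝ) ^ (((w : ℤ) - i) * ((δ : ℤ) - i)))
          / ((gaussBinom q n δ : ℚ) : ℝ))
      ≤ 64 * n * (q : ℝ) ^ ((m : ℝ) * ((k : ℝ) - n) + w * ((n : ℝ) + m) - (w : ℝ) ^ 2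
          - (⌈(δ : ℚ) / 2 + w - ((n : ℚ) - k) / 2⌉ : ℝ)
            * (((n : ℝ) + k) / 2 - (⌈(δ : ℚ) / 2⌉ : ℝ))) :=
  stmt10_general q m n k w δ hq hn hw1 hw2 hδ2
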